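/- arXiv:2311.13756 — 6 statements merged into one kernel-verified Lean document; each statement's English description precedes it below -/
import Mathlib

section
/- Define g(q) := (2 − q)(4 + q)². For every q ∈ [−6, 2], one has 1 − g(q)/16 ∈ [−1, 1], and with θ(q) := arccos(1 − g(q)/16) ∈ [0, π] the following identities hold: (i) if q ∈ [0, 2] then 4·cos(θ(q)/3) = q + 2; (ii) if q ∈ [−4, 0] then 4·cos(θ(q)/3 − 2π/3) = q + 2; (iii) if q ∈ [−6, −4] then 4·cos(θ(q)/3 − 4π/3) = q + 2. -/
open Real

/-- Helper: if `cos α = c` with `α = arccos c`, bounds on `c` give bounds on `α`. -/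
lemma arccos_le_of_cos_le {c y : ℝ} (hy0 : 0 ≤ y) (hyp : y ≤ Real.pi)
    (h : Real.cos y ≤ c) : Real.arccos c ≤ y := by
  rcases le_or_gt c 1 with hc1 | hc1
  · by_contra hlt
    push_neg at hlt
    have hcm1 : -1 ≤ c := le_trans (Real.neg_one_le_cos y) h
    have := Real.cos_lt_cos_of_nonneg_of_le_pi hy0 (Real.arccos_le_pi c) hlt
    rw [Real.cos_arccos hcm1 hc1] at this
    linarith
  · rw [Real.arccos_of_one_le hc1.le]; exact hy0

lemma le_arccos_of_le_cos {c y : ℝ} (hy0 : 0 ≤ y) (hyp : y ≤ Real.pi)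
    (h : c ≤ Real.cos y) : y ≤ Real.arccos c := by
  rcases le_or_gt (-1) c with hcm1 | hcm1
  · by_contra hlt
    push_neg at hlt
    have hc1 : c ≤ 1 := le_trans h (Real.cos_le_one y)
    have := Real.cos_lt_cos_of_nonneg_of_le_pi (Real.arccos_nonneg c) hyp hlt
    rw [Real.cos_arccos hcm1 hc1] at this
    linarith
  · rw [Real.arccos_of_le_neg_one hcm1.le]; exact hyp

/-- The correct Viète branch at `s = 1`: with `g(q) = (2 - q)(4 + q)²` and
`θ(q) = arccos(1 - g(q)/16)`, one has for `q ∈ [-6, 2]` that `1 - g(q)/16 ∈ [-1, 1]`,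
`θ(q) ∈ [0, π]`, and `4cos(θ/3 - 2πk/3) = q + 2` for `k = 0, 1, 2` according to
whether `q ∈ [0,2]`, `q ∈ [-4,0]`, or `q ∈ [-6,-4]`. -/
theorem stmt_7 (g : ℝ → ℝ) (hg : ∀ q, g q = (2 - q) * (4 + q) ^ 2)
    (θ : ℝ → ℝ) (hθ : ∀ q, θ q = Real.arccos (1 - g q / 16)) :
    ∀ q ∈ Set.Icc (-6 : ℝ) 2,
      (-1 ≤ 1 - g q / 16 ∧ 1 - g q / 16 ≤ 1) ∧
      θ q ∈ Set.Icc 0 Real.pi ∧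
      (q ∈ Set.Icc (0 : ℝ) 2 → 4 * Real.cos (θ q / 3) = q + 2) ∧
      (q ∈ Set.Icc (-4 : ℝ) 0 → 4 * Real.cos (θ q / 3 - 2 * Real.pi / 3) = q + 2) ∧
      (q ∈ Set.Icc (-6 : ℝ) (-4) → 4 * Real.cos (θ q / 3 - 4 * Real.pi / 3) = q + 2) := by
  intro q hq
  obtain ⟨hq1, hq2⟩ := hq
  have pi_pos := Real.pi_pos
  set c : ℝ := (q + 2) / 4 with hc
  have hgq : 1 - g q / 16 = 4 * c ^ 3 - 3 * c := by rw [hg, hc]; ring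
  have hb1 : -1 ≤ 1 - g q / 16 := by rw [hgq]; nlinarith [sq_nonneg (2*c - 1), sq_nonneg (c+1)]
  have hb2 : 1 - g q / 16 ≤ 1 := by rw [hgq]; nlinarith [sq_nonneg (2*c + 1), sq_nonneg (c-1)]
  set α : ℝ := Real.arccos c with hα
  have hcm1 : -1 ≤ c := by rw [hc]; linarith
  have hc1 : c ≤ 1 := by rw [hc]; linarith
  have hcosα : Real.cos α = c := Real.cos_arccos hcm1 hc1
  have hα0 : 0 ≤ α := Real.arccos_nonneg c
  have hαπ : α ≤ Real.pi := Real.arccos_le_pi c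
  have hcos3 : Real.cos (3 * α) = 1 - g q / 16 := by
    rw [Real.cos_three_mul, hcosα, hgq]
  have hcp3 : Real.cos (Real.pi / 3) = 1 / 2 := Real.cos_pi_div_three
  have hcp23 : Real.cos (2 * Real.pi / 3) = -(1 / 2) := by
    have : 2 * Real.pi / 3 = Real.pi - Real.pi / 3 := by ring
    rw [this, Real.cos_pi_sub, hcp3]
  refine ⟨⟨hb1, hb2⟩, ⟨by rw [hθ]; exact Real.arccos_nonneg _,
    by rw [hθ]; exact Real.arccos_le_pi _⟩, ?_, ?_, ?_⟩
  · rintro ⟨h1, h2⟩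
    have hcge : (1:ℝ)/2 ≤ c := by rw [hc]; linarith
    have hαle : α ≤ Real.pi / 3 := by
      apply arccos_le_of_cos_le (by positivity) (by linarith) (by rw [hcp3]; exact hcge)
    have hθeq : θ q = 3 * α := by
      rw [hθ]
      exact Real.arccos_eq_of_eq_cos (by linarith) (by linarith) hcos3.symm
    rw [hθeq]
    have : 3 * α / 3 = α := by ring
    rw [this, hcosα, hc]; ring
  · rintro ⟨h1, h2⟩
    have hcge : -(1:ℝ)/2 ≤ c := by rw [hc]; linarith
    have hcle : c ≤ 1/2 := by rw [hc]; linarith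
    have hαge : Real.pi / 3 ≤ α := by
      apply le_arccos_of_le_cos (by positivity) (by linarith) (by rw [hcp3]; exact hcle)
    have hαle : α ≤ 2 * Real.pi / 3 := by
      apply arccos_le_of_cos_le (by positivity) (by linarith) (by rw [hcp23]; linarith)
    have hθeq : θ q = 2 * Real.pi - 3 * α := by
      rw [hθ]
      refine Real.arccos_eq_of_eq_cos (by linarith) (by linarith) ?_
      rw [Real.cos_two_pi_sub, hcos3]
    rw [hθeq]
    have : (2 * Real.pi - 3 * α) / 3 - 2 * Real.pi / 3 = -α := by ring
    rw [this, Real.cos_neg, hcosα, hc]; ring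
  · rintro ⟨h1, h2⟩
    have hcle : c ≤ -(1:ℝ)/2 := by rw [hc]; linarith
    have hαge : 2 * Real.pi / 3 ≤ α := by
      apply le_arccos_of_le_cos (by positivity) (by linarith) (by rw [hcp23]; linarith)
    have hθeq : θ q = 3 * α - 2 * Real.pi := by
      rw [hθ]
      refine Real.arccos_eq_of_eq_cos (by linarith) (by linarith) ?_
      rw [Real.cos_sub_two_pi, hcos3]
    rw [hθeq]
    have : (3 * α - 2 * Real.pi) / 3 - 4 * Real.pi / 3 = α - 2 * Real.pi := by ring
    rw [this, Real.cos_sub_two_pi, hcosα, hc]; ring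
end

section
/- Let T > 0 and A : [0, T) → (0, ∞) be twice differentiable with A''(t) = 2(4 + A'(t))(2 − A'(t))/A(t) on [0, T), A'(0) < −4, and A(t) → 0 as t → T⁻. Then A(t) = O((T − t)^(1/3)) and A'(t) = O((T − t)^(−2/3)) as t → T⁻; in particular A'(t) → −∞ as t → T⁻. -/
/-!
Along a solution, `μ = A⁶ (2 - A') (4 + A')²` is conserved; it is positive at `t = 0`, so `A'`
can never reach `-4`. For `y = A² (-A')` the conservation law reads `y³ - 6 A² y² + 32 A⁶ = μ`,
hence `μ ≤ y³` and, once `A² ≤ 1`, `y ≤ μ + 7`. Near `T` the derivative `(A³)' = -3y` is thus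
pinched between two negative constants, and integrating back from `A³(T⁻) = 0` gives
`A³ ≍ T - t`. Then `A = O((T - t)^(1/3))`, `-A' = y / A² = O((T - t)^(-2/3))`, and
`-A' ≥ min 1 μ / A² → ∞`.
-/

open Filter Asymptotics Set Topology

lemma lt_of_forall_ne_of_continuousOn_Ico {g : ℝ → ℝ} {a b c : ℝ} (hg : ContinuousOn g (Ico a b))
    (ha : g a < c) (hne : ∀ t ∈ Ico a b, g t ≠ c) : ∀ t ∈ Ico a b, g t < c := by
  intro t ht
  by_contra! hct
  obtain ⟨s, hs, rfl⟩ := isPreconnected_Ico.intermediate_value (left_mem_Ico.2 (ht.1.trans_lt ht.2))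
    ht hg ⟨ha.le, hct⟩
  exact hne s hs rfl

lemma add_mul_sub_le_of_tendsto_nhdsLT {f f' : ℝ → ℝ} {a b C L : ℝ} (hab : a < b)
    (hf : ∀ s ∈ Ico a b, HasDerivAt f (f' s) s) (hf' : ∀ s ∈ Ico a b, C ≤ f' s)
    (hlim : Tendsto f (𝓝[<] b) (𝓝 L)) : f a + C * (b - a) ≤ L := by
  have hg : ∀ s ∈ Ico a b, HasDerivAt (fun x => f x - C * x) (f' s - C) s := fun s hs => by
    simpa using (hf s hs).fun_sub ((hasDerivAt_id s).const_mul C)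
  have hmono : MonotoneOn (fun x => f x - C * x) (Ico a b) :=
    monotoneOn_of_hasDerivWithinAt_nonneg (convex_Ico a b)
      (fun s hs => (hg s hs).continuousAt.continuousWithinAt)
      (fun s hs => (hg s (interior_subset hs)).hasDerivWithinAt)
      fun s hs => sub_nonneg.2 (hf' s (interior_subset hs))
  have hlim' : Tendsto (fun x => f x - C * x) (𝓝[<] b) (𝓝 (L - C * b)) :=
    hlim.sub ((continuous_const.mul continuous_id).tendsto b |>.mono_left nhdsWithin_le_nhds)
  have hle : f a - C * a ≤ L - C * b := ge_of_tendsto hlim' <| by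
    filter_upwards [Ioo_mem_nhdsLT hab] with s hs
    exact hmono (left_mem_Ico.2 hab) (Ioo_subset_Ico_self hs) hs.1.le
  linarith

lemma Filter.Eventually.forall_Ico_nhdsLT {p : ℝ → Prop} {b : ℝ} (h : ∀ᶠ t in 𝓝[<] b, p t) :
    ∀ᶠ t in 𝓝[<] b, ∀ s ∈ Ico t b, p s := by
  obtain ⟨a, hab, hsub⟩ := mem_nhdsLT_iff_exists_Ioo_subset.1 h
  filter_upwards [Ioo_mem_nhdsLT hab] with t ht s hs
  exact hsub ⟨ht.1.trans_le hs.1, hs.2⟩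

lemma pow_three_mem_Icc_of_sq_mul_neg_deriv_mem_Icc {A A' : ℝ → ℝ} {t T k c : ℝ} (htT : t < T)
    (hd : ∀ s ∈ Ico t T, HasDerivAt A (A' s) s) (hy : ∀ s ∈ Ico t T, A s ^ 2 * -A' s ∈ Icc k c)
    (hlim : Tendsto A (𝓝[<] T) (𝓝 0)) :
    A t ^ 3 ∈ Icc (3 * k * (T - t)) (3 * c * (T - t)) := by
  have hd3 : ∀ s ∈ Ico t T, HasDerivAt (fun x => A x ^ 3) (3 * A s ^ 2 * A' s) s := fun s hs => by
    simpa using (hd s hs).fun_pow 3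
  have hlim3 : Tendsto (fun x => A x ^ 3) (𝓝[<] T) (𝓝 0) := by simpa using hlim.pow 3
  have hupper := add_mul_sub_le_of_tendsto_nhdsLT (C := -(3 * c)) htT hd3
    (fun s hs => by nlinarith [(hy s hs).2]) hlim3
  have hlower := add_mul_sub_le_of_tendsto_nhdsLT (f := fun x => -A x ^ 3) (C := 3 * k) htT
    (fun s hs => (hd3 s hs).fun_neg) (fun s hs => by nlinarith [(hy s hs).1])
    (by simpa using hlim3.neg)
  constructor <;> linarith

lemma le_rpow_one_third_of_pow_three_le {a x : ℝ} (ha : 0 ≤ a) (hx : 0 ≤ x) (h : a ^ 3 ≤ x) :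
    a ≤ x ^ ((1 : ℝ) / 3) := by
  rw [one_div, Real.le_rpow_inv_iff_of_pos ha hx (by norm_num)]
  exact_mod_cast h

lemma inv_sq_le_rpow_neg_two_thirds {a x : ℝ} (ha : 0 ≤ a) (hx : 0 < x) (h : x ≤ a ^ 3) :
    (a ^ 2)⁻¹ ≤ x ^ (-(2 : ℝ) / 3) := by
  have hroot : x ^ ((1 : ℝ) / 3) ≤ a := by
    rw [one_div, Real.rpow_inv_le_iff_of_pos hx.le ha (by norm_num)]
    exact_mod_cast h
  have hsq : x ^ (-(2 : ℝ) / 3) = ((x ^ ((1 : ℝ) / 3)) ^ 2)⁻¹ := by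
    rw [← Real.rpow_natCast, ← Real.rpow_mul hx.le, ← Real.rpow_neg hx.le]
    norm_num
  rw [hsq]
  gcongr

lemma isBigO_rpow_one_third_of_pow_three_le {A : ℝ → ℝ} {T c : ℝ} (hc : 0 ≤ c)
    (h : ∀ᶠ t in 𝓝[<] T, 0 ≤ A t ∧ A t ^ 3 ≤ c * (T - t)) :
    A =O[𝓝[<] T] fun t => (T - t) ^ ((1 : ℝ) / 3) := by
  refine IsBigO.of_bound (c ^ ((1 : ℝ) / 3)) ?_
  filter_upwards [h, self_mem_nhdsWithin] with t ⟨hA, hA3⟩ (htT : t < T)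
  have hTt : 0 ≤ T - t := by linarith
  rw [Real.norm_of_nonneg hA, Real.norm_of_nonneg (Real.rpow_nonneg hTt _), ← Real.mul_rpow hc hTt]
  exact le_rpow_one_third_of_pow_three_le hA (by positivity) hA3

lemma isBigO_rpow_neg_two_thirds_of_le_pow_three {A A' : ℝ → ℝ} {T k c : ℝ} (hk : 0 < k)
    (h : ∀ᶠ t in 𝓝[<] T, 0 < A t ∧ A t ^ 2 * -A' t ∈ Icc 0 c ∧ k * (T - t) ≤ A t ^ 3) :
    A' =O[𝓝[<] T] fun t => (T - t) ^ (-(2 : ℝ) / 3) := by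
  refine IsBigO.of_bound (c * k ^ (-(2 : ℝ) / 3)) ?_
  filter_upwards [h, self_mem_nhdsWithin] with t ⟨hA, ⟨hy0, hyc⟩, hA3⟩ (htT : t < T)
  have hTt : 0 < T - t := by linarith
  have hA2 : 0 < A t ^ 2 := by positivity
  have hA' : A' t ≤ 0 := by nlinarith
  calc ‖A' t‖ = A t ^ 2 * -A' t * (A t ^ 2)⁻¹ := by
        rw [Real.norm_of_nonpos hA']
        field_simp
    _ ≤ c * (k * (T - t)) ^ (-(2 : ℝ) / 3) := by
        gcongr
        · exact hy0.trans hyc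
        · exact inv_sq_le_rpow_neg_two_thirds hA.le (by positivity) hA3
    _ = c * k ^ (-(2 : ℝ) / 3) * ‖(T - t) ^ (-(2 : ℝ) / 3)‖ := by
        rw [Real.mul_rpow hk.le hTt.le, Real.norm_of_nonneg (Real.rpow_nonneg hTt.le _), mul_assoc]

lemma tendsto_atBot_of_le_sq_mul_neg {A A' : ℝ → ℝ} {l : Filter ℝ} {k : ℝ} (hk : 0 < k)
    (hA : Tendsto A l (𝓝 0)) (h : ∀ᶠ t in l, k ≤ A t ^ 2 * -A' t) : Tendsto A' l atBot := by
  have hA2 : Tendsto (fun t => A t ^ 2) l (𝓝[>] 0) := by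
    refine tendsto_nhdsWithin_iff.2 ⟨by simpa using hA.pow 2, ?_⟩
    filter_upwards [h] with t ht
    exact lt_of_le_of_ne (sq_nonneg _) fun h0 => by rw [← h0, zero_mul] at ht; linarith
  have hinv : Tendsto (fun t => -(k * (A t ^ 2)⁻¹)) l atBot :=
    tendsto_neg_atTop_atBot.comp ((tendsto_inv_nhdsGT_zero.comp hA2).const_mul_atTop hk)
  refine tendsto_atBot_mono' l ?_ hinv
  filter_upwards [h, hA2.eventually self_mem_nhdsWithin] with t ht (hpos : 0 < A t ^ 2)
  rw [← div_eq_mul_inv, le_neg, div_le_iff₀ hpos]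
  linarith

def johnInvariant (a b : ℝ) : ℝ := a ^ 6 * ((2 - b) * (4 + b) ^ 2)

lemma johnInvariant_pos {a b : ℝ} (ha : a ≠ 0) (hb : b < -4) : 0 < johnInvariant a b := by
  have h2 : 0 < 2 - b := by linarith
  have h4 : 4 + b ≠ 0 := by linarith
  unfold johnInvariant
  positivity

lemma johnInvariant_le_pow_three {a b : ℝ} (hb : b ≤ -4) :
    johnInvariant a b ≤ (a ^ 2 * -b) ^ 3 := by
  have h : 0 ≤ a ^ 6 * (6 * b ^ 2 - 32) := mul_nonneg (by positivity) (by nlinarith)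
  unfold johnInvariant
  nlinarith

lemma pow_three_le_johnInvariant_add (a b : ℝ) :
    (a ^ 2 * -b) ^ 3 ≤ johnInvariant a b + 6 * a ^ 2 * (a ^ 2 * -b) ^ 2 := by
  unfold johnInvariant
  nlinarith [pow_two_nonneg (a ^ 3)]

lemma min_one_le_of_le_pow_three {m y : ℝ} (hy : 0 ≤ y) (h : m ≤ y ^ 3) : min 1 m ≤ y := by
  rcases le_total 1 y with h1 | h1
  · exact min_le_of_left_le h1
  · exact min_le_of_right_le (h.trans (pow_le_of_le_one hy h1 (by norm_num)))

lemma le_add_add_one_of_pow_three_le {m e y : ℝ} (hm : 0 ≤ m) (he : 0 ≤ e)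
    (h : y ^ 3 ≤ m + e * y ^ 2) : y ≤ m + e + 1 := by
  by_contra! hy
  have hy1 : 1 < y := by linarith
  nlinarith [mul_le_mul_of_nonneg_left hy1.le (by positivity : (0 : ℝ) ≤ m * y)]

lemma sq_mul_neg_mem_Icc_of_johnInvariant {a b : ℝ} (hb : b ≤ -4) (ha : a ^ 2 ≤ 1) :
    a ^ 2 * -b ∈ Icc (min 1 (johnInvariant a b)) (johnInvariant a b + 7) := by
  have hm : 0 ≤ johnInvariant a b := by
    have : 0 ≤ 2 - b := by linarith
    unfold johnInvariant
    positivity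
  have hy : 0 ≤ a ^ 2 * -b := mul_nonneg (sq_nonneg a) (by linarith)
  refine ⟨min_one_le_of_le_pow_three hy (johnInvariant_le_pow_three hb), ?_⟩
  have := le_add_add_one_of_pow_three_le hm (by positivity : 0 ≤ 6 * a ^ 2)
    (pow_three_le_johnInvariant_add a b)
  linarith

lemma hasDerivAt_johnInvariant {f g : ℝ → ℝ} {g' t : ℝ} (hf : HasDerivAt f (g t) t)
    (hg : HasDerivAt g g' t) (hft : f t ≠ 0) (hode : g' = 2 * (4 + g t) * (2 - g t) / f t) :
    HasDerivAt (fun s => johnInvariant (f s) (g s)) 0 t := by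
  have hpoly := ((hasDerivAt_const t 2).fun_sub hg).fun_mul ((hg.const_add 4).fun_pow 2)
  refine ((hf.fun_pow 6).fun_mul hpoly).congr_deriv ?_
  rw [hode]
  push_cast
  field_simp
  ring

lemma johnInvariant_eq_of_ode {a b : ℝ} {A A' A'' : ℝ → ℝ} (hA : ∀ t ∈ Ico a b, A t ≠ 0)
    (hd1 : ∀ t ∈ Ico a b, HasDerivAt A (A' t) t) (hd2 : ∀ t ∈ Ico a b, HasDerivAt A' (A'' t) t)
    (hode : ∀ t ∈ Ico a b, A'' t = 2 * (4 + A' t) * (2 - A' t) / A t) :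
    ∀ t ∈ Ico a b, johnInvariant (A t) (A' t) = johnInvariant (A a) (A' a) := by
  intro t ht
  have hderiv : ∀ s ∈ Ico a b,
      HasDerivWithinAt (fun s => johnInvariant (A s) (A' s)) 0 (Ico a b) s := fun s hs =>
    (hasDerivAt_johnInvariant (hd1 s hs) (hd2 s hs) (hA s hs) (hode s hs)).hasDerivWithinAt
  have h := (convex_Ico a b).norm_image_sub_le_of_norm_hasDerivWithin_le hderiv
    (fun _ _ => norm_zero.le) (left_mem_Ico.2 (ht.1.trans_lt ht.2)) ht
  simpa [sub_eq_zero] using h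

lemma deriv_lt_neg_four_of_ode {a b : ℝ} {A A' A'' : ℝ → ℝ} (hA : ∀ t ∈ Ico a b, A t ≠ 0)
    (hd1 : ∀ t ∈ Ico a b, HasDerivAt A (A' t) t) (hd2 : ∀ t ∈ Ico a b, HasDerivAt A' (A'' t) t)
    (hode : ∀ t ∈ Ico a b, A'' t = 2 * (4 + A' t) * (2 - A' t) / A t) (ha : A' a < -4) :
    ∀ t ∈ Ico a b, A' t < -4 := by
  refine lt_of_forall_ne_of_continuousOn_Ico
    (fun t ht => (hd2 t ht).continuousAt.continuousWithinAt) ha fun t ht hAt => ?_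
  have hzero : johnInvariant (A t) (A' t) = 0 := by simp [johnInvariant, hAt]
  have hpos := johnInvariant_pos (hA a (left_mem_Ico.2 (ht.1.trans_lt ht.2))) ha
  linarith [johnInvariant_eq_of_ode hA hd1 hd2 hode t ht]

/-- Blow-down rate at the finite terminal time for John's ODE
`A'' = 2(4 + A')(2 - A')/A` with `A > 0` on `[0, T)`, `A'(0) < -4`, and `A(t) → 0`
as `t → T⁻`: then `A(t) = O((T - t)^(1/3))`, `A'(t) = O((T - t)^(-2/3))`, and
`A'(t) → -∞` as `t → T⁻`. -/
theorem stmt_9 (T : ℝ) (hT : 0 < T) (A A' A'' : ℝ → ℝ)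
    (hpos : ∀ t ∈ Set.Ico (0 : ℝ) T, 0 < A t)
    (hd1 : ∀ t ∈ Set.Ico (0 : ℝ) T, HasDerivAt A (A' t) t)
    (hd2 : ∀ t ∈ Set.Ico (0 : ℝ) T, HasDerivAt A' (A'' t) t)
    (hode : ∀ t ∈ Set.Ico (0 : ℝ) T, A'' t = 2 * (4 + A' t) * (2 - A' t) / A t)
    (hA'0 : A' 0 < -4)
    (hlim : Filter.Tendsto A (nhdsWithin T (Set.Iio T)) (nhds 0)) :
    (A =O[nhdsWithin T (Set.Iio T)] fun t => (T - t) ^ ((1 : ℝ) / 3)) ∧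
    (A' =O[nhdsWithin T (Set.Iio T)] fun t => (T - t) ^ (-(2 : ℝ) / 3)) ∧
    Filter.Tendsto A' (nhdsWithin T (Set.Iio T)) Filter.atBot := by
  have hA : ∀ t ∈ Ico 0 T, A t ≠ 0 := fun t ht => (hpos t ht).ne'
  set m := johnInvariant (A 0) (A' 0)
  have hm : 0 < m := johnInvariant_pos (hA 0 (left_mem_Ico.2 hT)) hA'0
  have hinv := johnInvariant_eq_of_ode hA hd1 hd2 hode
  have hA' := deriv_lt_neg_four_of_ode hA hd1 hd2 hode hA'0
  have hy : ∀ᶠ t in 𝓝[<] T, t ∈ Ico 0 T ∧ A t ^ 2 * -A' t ∈ Icc (min 1 m) (m + 7) := by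
    filter_upwards [Ioo_mem_nhdsLT hT, hlim (Icc_mem_nhds neg_one_lt_zero zero_lt_one)]
      with t ht hAt
    have hsq : A t ^ 2 ≤ 1 := (sq_le_one_iff_abs_le_one _).2 (abs_le.2 hAt)
    have ht' := Ioo_subset_Ico_self ht
    have hbounds := sq_mul_neg_mem_Icc_of_johnInvariant (hA' t ht').le hsq
    rw [hinv t ht'] at hbounds
    exact ⟨ht', hbounds⟩
  have hcube : ∀ᶠ t in 𝓝[<] T, A t ^ 3 ∈ Icc (3 * min 1 m * (T - t)) (3 * (m + 7) * (T - t)) := by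
    filter_upwards [hy.forall_Ico_nhdsLT, self_mem_nhdsWithin] with t h htT
    exact pow_three_mem_Icc_of_sq_mul_neg_deriv_mem_Icc htT (fun s hs => hd1 s (h s hs).1)
      (fun s hs => (h s hs).2) hlim
  have hk : 0 < min 1 m := lt_min one_pos hm
  refine ⟨isBigO_rpow_one_third_of_pow_three_le (c := 3 * (m + 7)) (by positivity) ?_,
    isBigO_rpow_neg_two_thirds_of_le_pow_three (A := A) (k := 3 * min 1 m) (c := m + 7)
      (by positivity) ?_,
    tendsto_atBot_of_le_sq_mul_neg hk hlim (hy.mono fun t ht => ht.2.1)⟩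
  · filter_upwards [hy, hcube] with t ht h3
    exact ⟨(hpos t ht.1).le, h3.2⟩
  · filter_upwards [hy, hcube] with t ht h3
    exact ⟨hpos t ht.1, ⟨hk.le.trans ht.2.1, ht.2.2⟩, h3.1⟩
end

section
/- Fix q ∈ (−4, 2) and set β := 32/((2 − q)(4 + q)²) (so that β ≥ 1), and define V₁(s) := 4·cos((1/3)·arccos(1 − 2/(s⁶β)) − 2π/3) for s ≥ 1. Then, as s → ∞, V₁(s) + 2 − √(16/(3β))·s⁻³ = O(s⁻⁶). In particular V₁(s) → −2 as s → ∞. -/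
open Filter Asymptotics Real

/-! Put `u = 2 / (s⁶ β)` and `x = arccos (1 - u)`. Then `sin (x / 2) = √(u / 2)`, so the
claimed leading term `√(16 / (3β)) s⁻³` is `(4 / √3) sin (x / 2)`. Expanding
`cos (x / 3 - 2π / 3)`, the linear terms of `4 cos (x / 3 - 2π / 3) + 2` and
`(4 / √3) sin (x / 2)` cancel, leaving an error `O(x²)`; finally Jordan's inequality gives
`x² ≤ (π² / 2)(1 - cos x) = (π² / 2) u = O(s⁻⁶)`. -/

namespace Real

lemma four_cos_third_sub_two_pi_div_three_add_two_sub_sin_half_eq (x : ℝ) :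
    4 * cos (x / 3 - 2 * π / 3) + 2 - 4 / √3 * sin (x / 2)
      = 2 * (1 - cos (x / 3))
        + 2 / √3 * (3 * (sin (x / 3) - x / 3) - 2 * (sin (x / 2) - x / 2)) := by
  have h3 : √3 ^ 2 = 3 := sq_sqrt (by norm_num)
  have hangle : 2 * π / 3 = π - π / 3 := by ring
  rw [cos_sub, hangle, cos_pi_sub, sin_pi_sub, cos_pi_div_three, sin_pi_div_three]
  field_simp
  linear_combination (4 * sin (x / 3)) * h3

lemma abs_four_cos_third_sub_two_pi_div_three_add_two_sub_sin_half_le {x : ℝ} (hx : |x| ≤ π) :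
    |4 * cos (x / 3 - 2 * π / 3) + 2 - 4 / √3 * sin (x / 2)| ≤ x ^ 2 := by
  have hsqrt3 : 1 ≤ √3 := one_le_sqrt.2 (by norm_num)
  have hthird : |sin (x / 3) - x / 3| ≤ |x| ^ 3 / 162 := by
    rw [abs_sub_comm]
    convert abs_sub_sin_le (x / 3) using 1
    rw [abs_div]; norm_num; ring
  have hhalf : |sin (x / 2) - x / 2| ≤ |x| ^ 3 / 48 := by
    rw [abs_sub_comm]
    convert abs_sub_sin_le (x / 2) using 1
    rw [abs_div]; norm_num; ring
  have hcos : 0 ≤ 1 - cos (x / 3) ∧ 1 - cos (x / 3) ≤ x ^ 2 / 18 := by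
    constructor
    · linarith [cos_le_one (x / 3)]
    · linarith [one_sub_sq_div_two_le_cos (x := x / 3)]
  have hcube : |x| ^ 3 ≤ 4 * x ^ 2 := by
    calc |x| ^ 3 = x ^ 2 * |x| := by rw [pow_succ, sq_abs]
      _ ≤ x ^ 2 * 4 := by gcongr; linarith [pi_lt_four]
      _ = 4 * x ^ 2 := mul_comm _ _
  have hodd : |3 * (sin (x / 3) - x / 3) - 2 * (sin (x / 2) - x / 2)| ≤ x ^ 2 / 4 := by
    calc _ ≤ 3 * |sin (x / 3) - x / 3| + 2 * |sin (x / 2) - x / 2| := by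
            refine (abs_sub _ _).trans ?_
            rw [abs_mul, abs_mul]; norm_num
      _ ≤ x ^ 2 / 4 := by nlinarith
  rw [four_cos_third_sub_two_pi_div_three_add_two_sub_sin_half_eq]
  calc _ ≤ 2 * (1 - cos (x / 3)) + 2 / √3 * (x ^ 2 / 4) := by
          refine (abs_add_le _ _).trans ?_
          rw [abs_of_nonneg (by linarith), abs_mul, abs_of_pos (by positivity)]
          gcongr
    _ ≤ 2 * (x ^ 2 / 18) + 2 * (x ^ 2 / 4) := by
          gcongr
          · exact hcos.2
          · exact div_le_self zero_le_two hsqrt3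
    _ ≤ x ^ 2 := by nlinarith [sq_nonneg x]

lemma sin_arccos_one_sub_div_two {u : ℝ} (hu₀ : 0 ≤ u) (hu₂ : u ≤ 2) :
    sin (arccos (1 - u) / 2) = √(u / 2) := by
  rw [sin_half_eq_sqrt (arccos_nonneg _) (by linarith [arccos_le_pi (1 - u), pi_pos]),
    cos_arccos (by linarith) (by linarith), sub_sub_cancel]

lemma arccos_one_sub_sq_le {u : ℝ} (hu₀ : 0 ≤ u) (hu₂ : u ≤ 2) :
    arccos (1 - u) ^ 2 ≤ π ^ 2 / 2 * u := by
  have hx : |arccos (1 - u)| ≤ π := by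
    rw [abs_of_nonneg (arccos_nonneg _)]; exact arccos_le_pi _
  have h := cos_le_one_sub_mul_cos_sq hx
  rw [cos_arccos (by linarith) (by linarith)] at h
  have hπ : 0 < π ^ 2 := by positivity
  field_simp at h ⊢
  linarith

lemma abs_four_cos_arccos_one_sub_third_add_two_sub_le {u : ℝ} (hu₀ : 0 ≤ u) (hu₂ : u ≤ 2) :
    |4 * cos (arccos (1 - u) / 3 - 2 * π / 3) + 2 - 4 / √3 * √(u / 2)| ≤ π ^ 2 / 2 * u := by
  rw [← sin_arccos_one_sub_div_two hu₀ hu₂]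
  refine (abs_four_cos_third_sub_two_pi_div_three_add_two_sub_sin_half_le ?_).trans
    (arccos_one_sub_sq_le hu₀ hu₂)
  rw [abs_of_nonneg (arccos_nonneg _)]
  exact arccos_le_pi _

lemma abs_four_cos_arccos_one_sub_two_div_add_two_sub_le {s β : ℝ} (hs : 1 ≤ s) (hβ : 1 ≤ β) :
    |4 * cos (arccos (1 - 2 / (s ^ 6 * β)) / 3 - 2 * π / 3) + 2 - √(16 / (3 * β)) * s ^ (-3 : ℤ)|
      ≤ π ^ 2 * s ^ (-6 : ℤ) := by
  have hs₀ : 0 < s := by linarith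
  have hβ₀ : 0 < β := by linarith
  have hsβ : s ^ 6 ≤ s ^ 6 * β := le_mul_of_one_le_right (by positivity) hβ
  have hu₀ : 0 ≤ 2 / (s ^ 6 * β) := by positivity
  have hu₂ : 2 / (s ^ 6 * β) ≤ 2 :=
    div_le_self zero_le_two (one_le_pow₀ hs |>.trans hsβ)
  have hterm : √(16 / (3 * β)) * s ^ (-3 : ℤ) = 4 / √3 * √(2 / (s ^ 6 * β) / 2) := by
    rw [← sq_eq_sq₀ (by positivity) (by positivity), mul_pow, mul_pow, div_pow,
      sq_sqrt (by positivity), sq_sqrt (by positivity), sq_sqrt (by positivity), zpow_neg,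
      zpow_ofNat]
    field_simp
    ring
  rw [hterm]
  refine (abs_four_cos_arccos_one_sub_third_add_two_sub_le hu₀ hu₂).trans ?_
  rw [zpow_neg, zpow_ofNat]
  calc π ^ 2 / 2 * (2 / (s ^ 6 * β)) = π ^ 2 / (s ^ 6 * β) := by ring
    _ ≤ π ^ 2 / s ^ 6 := by gcongr
    _ = π ^ 2 * (s ^ 6)⁻¹ := div_eq_mul_inv _ _

end Real

/-- Large-`s` expansion of the Viète branch `V₁`: for `q ∈ (-4, 2)` and
`β = 32/((2 - q)(4 + q)²)`, `V₁(s) + 2 - √(16/(3β)) s⁻³ = O(s⁻⁶)` as `s → ∞`;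
in particular `V₁(s) → -2`. -/
theorem stmt_12 (q : ℝ) (hq : q ∈ Set.Ioo (-4 : ℝ) 2)
    (β : ℝ) (hβ : β = 32 / ((2 - q) * (4 + q) ^ 2))
    (V₁ : ℝ → ℝ)
    (hV : ∀ s : ℝ, 1 ≤ s →
      V₁ s = 4 * Real.cos (Real.arccos (1 - 2 / (s ^ 6 * β)) / 3 - 2 * Real.pi / 3)) :
    ((fun s : ℝ => V₁ s + 2 - Real.sqrt (16 / (3 * β)) * s ^ (-3 : ℤ))
        =O[Filter.atTop] fun s : ℝ => s ^ (-6 : ℤ)) ∧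
    Filter.Tendsto V₁ Filter.atTop (nhds (-2)) := by
  obtain ⟨hq₁, hq₂⟩ := hq
  have hβ₁ : 1 ≤ β := by
    rw [hβ, le_div_iff₀ (mul_pos (by linarith) (pow_pos (by linarith) 2))]
    nlinarith [sq_nonneg q]
  have hO : (fun s : ℝ => V₁ s + 2 - √(16 / (3 * β)) * s ^ (-3 : ℤ)) =O[atTop]
      fun s : ℝ => s ^ (-6 : ℤ) := by
    refine IsBigO.of_bound (π ^ 2) ?_
    filter_upwards [eventually_ge_atTop 1] with s hs
    rw [norm_eq_abs, norm_of_nonneg (by positivity), hV s hs]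
    exact abs_four_cos_arccos_one_sub_two_div_add_two_sub_le hs hβ₁
  refine ⟨hO, ?_⟩
  have hlim := ((hO.trans_tendsto (tendsto_zpow_atTop_zero (by norm_num))).add
    ((tendsto_zpow_atTop_zero (by norm_num : (-3 : ℤ) < 0)).const_mul √(16 / (3 * β)))).sub_const 2
  simpa using hlim
end

section
/- Fix q ∈ [−6, −4) and set β := 32/((2 − q)(4 + q)²) (so that β > 0), and define V₂(s) := 4·cos((1/3)·arccos(1 − 2/(s⁶β)) − 4π/3) for s ≥ 1. Then, as s → ∞, V₂(s) + 2 + √(16/(3β))·s⁻³ = O(s⁻⁶). In particular V₂(s) → −2 as s → ∞. -/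
open Filter Asymptotics Real Topology

/-!
Put `y = s⁻³/√β` and `φ = arccos (1 - 2y²)`, so that `V₂ s = 4 cos (φ/3 - 4π/3)` and
`√(16/(3β)) s⁻³ = (4/√3) y`. Since `sin (φ/2) = y` and `φ ≤ π y`, it suffices to expand
`4 cos (φ/3 - 4π/3) = -2 cos (φ/3) - 2√3 sin (φ/3)`: the terms linear in `φ` cancel against
`(4/√3) sin (φ/2)` because `2√3 · φ/3 = (4/√3) · φ/2`, and what is left is `O(φ²) = O(y²) = O(s⁻⁶)`.
-/

lemma four_cos_sub_four_pi_div_three (t : ℝ) :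
    4 * cos (t - 4 * π / 3) = -2 * cos t - 2 * √3 * sin t := by
  have hcos : cos (4 * π / 3) = -(1 / 2) := by
    rw [show 4 * π / 3 = π / 3 + π by ring, cos_add_pi, cos_pi_div_three]
  have hsin : sin (4 * π / 3) = -(√3 / 2) := by
    rw [show 4 * π / 3 = π / 3 + π by ring, sin_add_pi, sin_pi_div_three]
  rw [cos_sub, hcos, hsin]
  ring

lemma abs_four_cos_sub_add_two_add_sin_le {φ : ℝ} (hφ₀ : 0 ≤ φ) (hφ₁ : φ ≤ 1) :
    |4 * cos (φ / 3 - 4 * π / 3) + 2 + 4 / √3 * sin (φ / 2)| ≤ φ ^ 2 / 4 := by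
  have h3 : √3 ^ 2 = 3 := sq_sqrt (by norm_num)
  have h3₀ : 0 < √3 := by positivity
  have h3₂ : √3 ≤ 2 := by nlinarith
  have hc : 4 / √3 ≤ 3 := by rw [div_le_iff₀ h3₀]; nlinarith
  have hsplit : 4 * cos (φ / 3 - 4 * π / 3) + 2 + 4 / √3 * sin (φ / 2)
      = 2 * (1 - cos (φ / 3)) + 2 * √3 * (φ / 3 - sin (φ / 3))
        - 4 / √3 * (φ / 2 - sin (φ / 2)) := by
    rw [four_cos_sub_four_pi_div_three]
    field_simp
    linear_combination (-4 * φ) * h3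
  have hcos : |1 - cos (φ / 3)| ≤ (φ / 3) ^ 2 / 2 := by
    rw [abs_of_nonneg (by linarith [cos_le_one (φ / 3)])]
    linarith [one_sub_sq_div_two_le_cos (x := φ / 3)]
  have hsin₃ := abs_sub_sin_le (φ / 3)
  have hsin₂ := abs_sub_sin_le (φ / 2)
  rw [abs_of_nonneg (by positivity : 0 ≤ φ / 3)] at hsin₃
  rw [abs_of_nonneg (by positivity : 0 ≤ φ / 2)] at hsin₂
  have hφ3 : φ ^ 3 ≤ φ ^ 2 := pow_le_pow_of_le_one hφ₀ hφ₁ (by norm_num)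
  rw [hsplit]
  calc _ ≤ 2 * |1 - cos (φ / 3)| + 2 * √3 * |φ / 3 - sin (φ / 3)|
        + 4 / √3 * |φ / 2 - sin (φ / 2)| := by
        refine (abs_sub _ _).trans ((add_le_add_left (abs_add_le _ _) _).trans_eq ?_)
        simp only [abs_mul, abs_two, abs_of_pos h3₀, abs_of_pos (by positivity : 0 < 4 / √3)]
    _ ≤ 2 * ((φ / 3) ^ 2 / 2) + 2 * 2 * ((φ / 3) ^ 3 / 6) + 3 * ((φ / 2) ^ 3 / 6) := by
        gcongr
    _ ≤ φ ^ 2 / 4 := by nlinarith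

lemma sin_half_arccos_one_sub_two_mul_sq {y : ℝ} (hy₀ : 0 ≤ y) (hy₁ : y ≤ 1) :
    sin (arccos (1 - 2 * y ^ 2) / 2) = y := by
  rw [sin_half_eq_sqrt (arccos_nonneg _) (by linarith [arccos_le_pi (1 - 2 * y ^ 2), pi_pos]),
    cos_arccos (by nlinarith) (by nlinarith), sub_sub_cancel, mul_div_cancel_left₀ _ two_ne_zero,
    sqrt_sq hy₀]

lemma arccos_one_sub_two_mul_sq_le {y : ℝ} (hy₀ : 0 ≤ y) (hy₁ : y ≤ 1) :
    arccos (1 - 2 * y ^ 2) ≤ π * y := by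
  set φ := arccos (1 - 2 * y ^ 2)
  have hφ₀ : 0 ≤ φ := arccos_nonneg _
  have hcos : cos φ ≤ 1 - 2 / π ^ 2 * φ ^ 2 :=
    cos_le_one_sub_mul_cos_sq (abs_le.2 ⟨by linarith [pi_pos], arccos_le_pi _⟩)
  rw [cos_arccos (by nlinarith) (by nlinarith)] at hcos
  have hsq : φ ^ 2 ≤ (π * y) ^ 2 := by
    have h : 2 / π ^ 2 * φ ^ 2 ≤ 2 * y ^ 2 := by linarith
    rw [div_mul_eq_mul_div, div_le_iff₀ (by positivity)] at h
    linarith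
  exact (pow_le_pow_iff_left₀ hφ₀ (by positivity) two_ne_zero).1 hsq

lemma isBigO_four_cos_arccos_add_two :
    (fun y : ℝ => 4 * cos (arccos (1 - 2 * y ^ 2) / 3 - 4 * π / 3) + 2 + 4 / √3 * y)
      =O[𝓝[≥] 0] fun y => y ^ 2 := by
  refine .of_bound 4 ?_
  filter_upwards [Icc_mem_nhdsGE (by norm_num : (0 : ℝ) < 1 / 4)] with y ⟨hy₀, hy⟩
  have hφ := arccos_one_sub_two_mul_sq_le hy₀ (by linarith)
  have hπy : π * y ≤ 1 := by nlinarith [pi_le_four]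
  have hφ₀ := arccos_nonneg (1 - 2 * y ^ 2)
  have hrem := abs_four_cos_sub_add_two_add_sin_le hφ₀ (hφ.trans hπy)
  rw [sin_half_arccos_one_sub_two_mul_sq hy₀ (by linarith)] at hrem
  rw [norm_eq_abs, norm_eq_abs, abs_of_nonneg (sq_nonneg y)]
  calc _ ≤ arccos (1 - 2 * y ^ 2) ^ 2 / 4 := hrem
    _ ≤ (π * y) ^ 2 / 4 := by gcongr
    _ ≤ (4 * y) ^ 2 / 4 := by gcongr; exact pi_le_four
    _ = 4 * y ^ 2 := by ring

lemma sq_zpow_neg_three_div_sqrt {β : ℝ} (hβ : 0 ≤ β) (s : ℝ) :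
    (s ^ (-3 : ℤ) / √β) ^ 2 = β⁻¹ * s ^ (-6 : ℤ) := by
  rw [div_pow, sq_sqrt hβ, ← zpow_natCast, ← zpow_mul]
  ring_nf

lemma sqrt_sixteen_div_three_mul {β : ℝ} (hβ : 0 ≤ β) : √(16 / (3 * β)) = 4 / √3 / √β := by
  rw [sqrt_div' _ (by positivity), sqrt_mul (by norm_num),
    show (16 : ℝ) = 4 ^ 2 by norm_num, sqrt_sq (by norm_num)]
  ring

lemma tendsto_zpow_neg_three_div_sqrt_nhdsGE (β : ℝ) :
    Tendsto (fun s : ℝ => s ^ (-3 : ℤ) / √β) atTop (𝓝[≥] 0) := by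
  refine tendsto_nhdsWithin_iff.2 ⟨?_, ?_⟩
  · simpa only [zero_div] using
      (tendsto_zpow_atTop_zero (by norm_num : (-3 : ℤ) < 0)).div_const √β
  · filter_upwards [eventually_ge_atTop 0] with s hs
    exact div_nonneg (zpow_nonneg hs _) (sqrt_nonneg β)

/-- Large-`s` expansion of the Viète branch `V₂`: for `q ∈ [-6, -4)` and
`β = 32/((2 - q)(4 + q)²)`, `V₂(s) + 2 + √(16/(3β)) s⁻³ = O(s⁻⁶)` as `s → ∞`;
in particular `V₂(s) → -2`. -/
theorem stmt_13 (q : ℝ) (hq : q ∈ Set.Ico (-6 : ℝ) (-4))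
    (β : ℝ) (hβ : β = 32 / ((2 - q) * (4 + q) ^ 2))
    (V₂ : ℝ → ℝ)
    (hV : ∀ s : ℝ, 1 ≤ s →
      V₂ s = 4 * Real.cos (Real.arccos (1 - 2 / (s ^ 6 * β)) / 3 - 4 * Real.pi / 3)) :
    ((fun s : ℝ => V₂ s + 2 + Real.sqrt (16 / (3 * β)) * s ^ (-3 : ℤ))
        =O[Filter.atTop] fun s : ℝ => s ^ (-6 : ℤ)) ∧
    Filter.Tendsto V₂ Filter.atTop (nhds (-2)) := by
  have hβ₀ : 0 < β := hβ ▸ div_pos (by norm_num) (by nlinarith [hq.1, hq.2])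
  have hy := tendsto_zpow_neg_three_div_sqrt_nhdsGE β
  set y : ℝ → ℝ := fun s => s ^ (-3 : ℤ) / √β
  have hexpand : (fun s => V₂ s + 2 + √(16 / (3 * β)) * s ^ (-3 : ℤ)) =ᶠ[atTop]
      fun s => 4 * cos (arccos (1 - 2 * y s ^ 2) / 3 - 4 * π / 3) + 2 + 4 / √3 * y s := by
    filter_upwards [eventually_ge_atTop 1] with s hs
    have harg : 2 * y s ^ 2 = 2 / (s ^ 6 * β) := by
      rw [sq_zpow_neg_three_div_sqrt hβ₀.le, zpow_neg, zpow_ofNat]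
      ring
    rw [hV s hs, harg, sqrt_sixteen_div_three_mul hβ₀.le]
    ring
  have hy_sq : (fun s => y s ^ 2) =O[atTop] fun s : ℝ => s ^ (-6 : ℤ) :=
    (isBigO_const_mul_self β⁻¹ _ _).congr_left fun s => (sq_zpow_neg_three_div_sqrt hβ₀.le s).symm
  have hbig := hexpand.trans_isBigO
    ((isBigO_four_cos_arccos_add_two.comp_tendsto hy).trans hy_sq)
  refine ⟨hbig, ?_⟩
  have hcorr : Tendsto (fun s : ℝ => √(16 / (3 * β)) * s ^ (-3 : ℤ)) atTop (𝓝 0) := by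
    simpa using (tendsto_zpow_atTop_zero (by norm_num : (-3 : ℤ) < 0)).const_mul √(16 / (3 * β))
  simpa using ((hbig.trans_tendsto (tendsto_zpow_atTop_zero (by norm_num))).sub hcorr).sub_const 2
end

section
/- Fix q ∈ (−4, 2) and set β := 32/((2 − q)(4 + q)²) (so that β ≥ 1), and define V₀(s) := 4·cos((1/3)·arccos(1 − 2/(s⁶β))) for s ≥ 1. Then V₀(s) − 2 > 0 for every s > 1, and for every x₀ > 1 the integral ∫_{x₀}^{x} ds/(V₀(s) − 2) tends to +∞ as x → ∞. -/
open Filter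

theorem key_lemma (q : ℝ) (hq : q ∈ Set.Ioo (-4 : ℝ) 2)
    (β : ℝ) (hβ : β = 32 / ((2 - q) * (4 + q) ^ 2))
    (V₀ : ℝ → ℝ)
    (hV : ∀ s : ℝ, 1 ≤ s →
      V₀ s = 4 * Real.cos (Real.arccos (1 - 2 / (s ^ 6 * β)) / 3)) :
    ∀ s : ℝ, 1 < s → 2 < V₀ s ∧ V₀ s < 4 := by
  obtain ⟨hq1, hq2⟩ := hq
  have hD : 0 < (2 - q) * (4 + q) ^ 2 := by
    have : 0 < 4 + q := by linarith
    have : 0 < 2 - q := by linarith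
    positivity
  have hβ1 : 1 ≤ β := by
    rw [hβ, le_div_iff₀ hD]
    nlinarith [mul_nonneg (sq_nonneg q) (by linarith : (0:ℝ) ≤ 6 + q)]
  intro s hs
  have hs6 : 1 < s ^ 6 := one_lt_pow₀ hs (by norm_num)
  have hs6β : 1 < s ^ 6 * β := by nlinarith
  have hpos : 0 < s ^ 6 * β := by linarith
  set t : ℝ := 1 - 2 / (s ^ 6 * β) with ht
  have h1 : -1 < t := by
    have : 2 / (s ^ 6 * β) < 2 := by
      rw [div_lt_iff₀ hpos]; nlinarith
    simp only [ht]; linarith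
  have h2 : t < 1 := by
    have : 0 < 2 / (s ^ 6 * β) := by positivity
    simp only [ht]; linarith
  have harc1 : 0 < Real.arccos t := Real.arccos_pos.mpr h2
  have harc2 : Real.arccos t < Real.pi :=
    lt_of_le_of_ne (Real.arccos_le_pi t) (fun h => by
      have := Real.arccos_eq_pi.mp h; linarith)
  have hpi : 0 < Real.pi := Real.pi_pos
  set a : ℝ := Real.arccos t / 3 with ha
  have ha0 : 0 < a := by positivity
  have ha3 : a < Real.pi / 3 := by simp only [ha]; linarith
  have hamem : a ∈ Set.Icc 0 Real.pi := ⟨ha0.le, by linarith⟩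
  have hcos1 : Real.cos a < 1 := by
    have := Real.strictAntiOn_cos ⟨le_refl 0, hpi.le⟩ hamem ha0
    simpa using this
  have hcos2 : 1 / 2 < Real.cos a := by
    have hmem3 : Real.pi / 3 ∈ Set.Icc 0 Real.pi := ⟨by positivity, by linarith⟩
    have := Real.strictAntiOn_cos hamem hmem3 ha3
    rw [Real.cos_pi_div_three] at this
    linarith
  rw [hV s hs.le]
  constructor <;> [linarith; linarith]

/-- Divergence of the time integral in Regime 4(i): for `q ∈ (-4, 2)` and
`β = 32/((2 - q)(4 + q)²)`, the Viète branch satisfies `V₀(s) - 2 > 0` for `s > 1`,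
and `∫_{x₀}^{x} ds/(V₀(s) - 2) → ∞` as `x → ∞` for every `x₀ > 1`. -/
theorem stmt_14 (q : ℝ) (hq : q ∈ Set.Ioo (-4 : ℝ) 2)
    (β : ℝ) (hβ : β = 32 / ((2 - q) * (4 + q) ^ 2))
    (V₀ : ℝ → ℝ)
    (hV : ∀ s : ℝ, 1 ≤ s →
      V₀ s = 4 * Real.cos (Real.arccos (1 - 2 / (s ^ 6 * β)) / 3)) :
    (∀ s : ℝ, 1 < s → 0 < V₀ s - 2) ∧
    ∀ x₀ : ℝ, 1 < x₀ →
      Filter.Tendsto (fun x => ∫ s in x₀..x, 1 / (V₀ s - 2))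
        Filter.atTop Filter.atTop := by
  have key := key_lemma q hq β hβ V₀ hV
  refine ⟨fun s hs => by linarith [(key s hs).1], ?_⟩
  intro x₀ hx₀
  have hcont : ContinuousOn (fun s => 1 / (V₀ s - 2)) (Set.Ici x₀) := by
    have hformula : ContinuousOn
        (fun s : ℝ => 4 * Real.cos (Real.arccos (1 - 2 / (s ^ 6 * β)) / 3))
        (Set.Ici x₀) := by
      apply ContinuousOn.mul continuousOn_const
      apply Real.continuous_cos.comp_continuousOn
      apply ContinuousOn.div_const
      apply Real.continuous_arccos.comp_continuousOn
      apply ContinuousOn.sub continuousOn_const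
      apply ContinuousOn.div continuousOn_const
      · exact (continuousOn_pow 6).mul continuousOn_const
      · intro s hs
        have h1s : 1 < s := lt_of_lt_of_le hx₀ hs
        have hD : 0 < (2 - q) * (4 + q) ^ 2 := by
          obtain ⟨hq1, hq2⟩ := hq
          have : 0 < 4 + q := by linarith
          have : 0 < 2 - q := by linarith
          positivity
        have hβpos : 0 < β := by rw [hβ]; positivity
        have : 0 < s ^ 6 * β := by positivity
        exact ne_of_gt this
    have hVcont : ContinuousOn V₀ (Set.Ici x₀) :=
      hformula.congr fun s hs => hV s (le_trans hx₀.le hs)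
    apply ContinuousOn.div continuousOn_const (hVcont.sub continuousOn_const)
    intro s hs
    exact sub_ne_zero.mpr (ne_of_gt (key s (lt_of_lt_of_le hx₀ hs)).1)
  have hmono : ∀ x, x₀ ≤ x → (x - x₀) / 2 ≤ ∫ s in x₀..x, 1 / (V₀ s - 2) := by
    intro x hx
    have hint : IntervalIntegrable (fun s => 1 / (V₀ s - 2)) MeasureTheory.volume x₀ x :=
      (hcont.mono (by rw [Set.uIcc_of_le hx]; exact fun y hy => hy.1)).intervalIntegrable
    have h2 : (∫ _ in x₀..x, (1:ℝ)/2) = (x - x₀) / 2 := by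
      simp [intervalIntegral.integral_const, smul_eq_mul]; ring
    rw [← h2]
    apply intervalIntegral.integral_mono_on hx intervalIntegrable_const hint
    intro s hs
    obtain ⟨h2v, h4v⟩ := key s (lt_of_lt_of_le hx₀ hs.1)
    have := one_div_le_one_div_of_le (by linarith : (0:ℝ) < V₀ s - 2)
      (by linarith : V₀ s - 2 ≤ 2)
    linarith
  have hbase : Tendsto (fun x : ℝ => (x - x₀) / 2) atTop atTop := by
    apply Tendsto.atTop_div_const (by norm_num : (0:ℝ) < 2)
    exact tendsto_atTop_add_const_right atTop (-x₀) tendsto_id |>.congr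
      (fun x => by simp only [id]; ring)
  exact tendsto_atTop_mono' atTop (eventually_atTop.2 ⟨x₀, hmono⟩) hbase
end

section
/- Let I ⊆ ℝ be an interval, ε ∈ ℝ, and let γ : I → (0, ∞) be twice differentiable satisfying (γ³ + 1/2)·γ·γ'' − (3/4)·(γ')² + ε²·γ⁴ = 0 on I. Then the function E(t) := (1 + 1/(2γ(t)³))·(γ'(t))² + 2ε²·γ(t) is constant on I. Consequently, writing E ≡ 2C, one has (γ'(t))² = 2γ(t)³(C − ε²γ(t))/(γ(t)³ + 1/2) for all t ∈ I, and if ε ≠ 0 then γ(t) ≤ C/ε² for all t ∈ I. -/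
/-
The energy `E = (1 + 1/(2γ³))(γ')² + 2ε²γ` is a first integral: differentiating,
`E' = (2γ'/γ⁴)·((γ³ + 1/2)γγ'' − (3/4)(γ')² + ε²γ⁴)`, so `E` has zero derivative along
solutions and is constant on the interval by the mean value inequality. Since
`(1 + 1/(2γ³))(γ')² ≥ 0`, the identity `E = 2C` also forces `2ε²γ ≤ 2C`.
-/

theorem Convex.eq_of_hasDerivWithinAt_eq_zero {𝕜 G : Type*} [RCLike 𝕜] [NormedAddCommGroup G]
    [NormedSpace 𝕜 G] {f : 𝕜 → G} {s : Set 𝕜} (hs : Convex ℝ s)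
    (hf : ∀ x ∈ s, HasDerivWithinAt f 0 s x) {x y : 𝕜} (hx : x ∈ s) (hy : y ∈ s) :
    f y = f x := by
  have h := hs.norm_image_sub_le_of_norm_hasDerivWithin_le hf (fun _ _ => norm_zero.le) hx hy
  rwa [zero_mul, norm_le_zero_iff, sub_eq_zero] at h

namespace Ovsjannikov

noncomputable def energy (ε : ℝ) (γ γ' : ℝ → ℝ) (t : ℝ) : ℝ :=
  (1 + 1 / (2 * γ t ^ 3)) * γ' t ^ 2 + 2 * ε ^ 2 * γ t

noncomputable def odeResidual (ε g g' g'' : ℝ) : ℝ :=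
  (g ^ 3 + 1 / 2) * g * g'' - 3 / 4 * g' ^ 2 + ε ^ 2 * g ^ 4

theorem hasDerivWithinAt_energy {ε : ℝ} {γ γ' γ'' : ℝ → ℝ} {s : Set ℝ} {t : ℝ}
    (hγt : γ t ≠ 0) (hγ : HasDerivWithinAt γ (γ' t) s t)
    (hγ' : HasDerivWithinAt γ' (γ'' t) s t) :
    HasDerivWithinAt (energy ε γ γ')
      (2 * γ' t / γ t ^ 4 * odeResidual ε (γ t) (γ' t) (γ'' t)) s t := by
  have hcube : HasDerivWithinAt (fun u => 2 * γ u ^ 3) (2 * (3 * γ t ^ 2 * γ' t)) s t := by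
    simpa using (hγ.pow 3).const_mul 2
  have hinv : HasDerivWithinAt (fun u => 1 / (2 * γ u ^ 3))
      (-(2 * (3 * γ t ^ 2 * γ' t)) / (2 * γ t ^ 3) ^ 2) s t := by
    simpa only [one_div, Pi.inv_def] using hcube.inv (by positivity)
  refine (((hinv.const_add 1).mul (hγ'.pow 2)).add (hγ.const_mul (2 * ε ^ 2))).congr_deriv ?_
  simp only [odeResidual, Pi.pow_apply]
  field_simp
  ring

theorem sq_deriv_eq_of_energy_eq {ε g g' e : ℝ} (hg : 0 < g)
    (he : (1 + 1 / (2 * g ^ 3)) * g' ^ 2 + 2 * ε ^ 2 * g = e) :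
    g' ^ 2 = 2 * g ^ 3 * (e / 2 - ε ^ 2 * g) / (g ^ 3 + 1 / 2) := by
  have hden : g ^ 3 + 1 / 2 ≠ 0 := by positivity
  field_simp at he ⊢
  linear_combination he

theorem le_of_energy_eq {ε g g' e : ℝ} (hε : ε ≠ 0) (hg : 0 < g)
    (he : (1 + 1 / (2 * g ^ 3)) * g' ^ 2 + 2 * ε ^ 2 * g = e) :
    g ≤ e / 2 / ε ^ 2 := by
  have hkin : 0 ≤ (1 + 1 / (2 * g ^ 3)) * g' ^ 2 := by positivity
  rw [div_div, le_div_iff₀ (by positivity)]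
  linarith

end Ovsjannikov

/-- First integral of the `γ`-ODE `(γ³ + 1/2)γγ'' - (3/4)(γ')² + ε²γ⁴ = 0`:
the energy `E = (1 + 1/(2γ³))(γ')² + 2ε²γ` is constant; writing `E ≡ 2C`,
`(γ')² = 2γ³(C - ε²γ)/(γ³ + 1/2)`, and if `ε ≠ 0` then `γ ≤ C/ε²`. -/
theorem stmt_18 (I : Set ℝ) (hI : Convex ℝ I) (ε : ℝ)
    (γ γ' γ'' : ℝ → ℝ)
    (hγpos : ∀ t ∈ I, 0 < γ t)
    (hγ : ∀ t ∈ I, HasDerivWithinAt γ (γ' t) I t)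
    (hγ2 : ∀ t ∈ I, HasDerivWithinAt γ' (γ'' t) I t)
    (hode : ∀ t ∈ I,
      (γ t ^ 3 + 1 / 2) * γ t * γ'' t - 3 / 4 * γ' t ^ 2 + ε ^ 2 * γ t ^ 4 = 0)
    (E : ℝ → ℝ)
    (hE : ∀ t, E t = (1 + 1 / (2 * γ t ^ 3)) * γ' t ^ 2 + 2 * ε ^ 2 * γ t) :
    ∀ t₀ ∈ I, ∀ t ∈ I,
      E t = E t₀ ∧
      γ' t ^ 2 = 2 * γ t ^ 3 * (E t₀ / 2 - ε ^ 2 * γ t) / (γ t ^ 3 + 1 / 2) ∧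
      (ε ≠ 0 → γ t ≤ E t₀ / 2 / ε ^ 2) := by
  have hEeq : E = Ovsjannikov.energy ε γ γ' := funext hE
  have hE' : ∀ t ∈ I, HasDerivWithinAt E 0 I t := fun t ht => by
    have h := Ovsjannikov.hasDerivWithinAt_energy (ε := ε) (hγpos t ht).ne' (hγ t ht) (hγ2 t ht)
    rwa [Ovsjannikov.odeResidual, hode t ht, mul_zero, ← hEeq] at h
  intro t₀ ht₀ t ht
  have hconst : E t = E t₀ := hI.eq_of_hasDerivWithinAt_eq_zero hE' ht₀ ht
  have henergy := (hE t).symm.trans hconst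
  exact ⟨hconst, Ovsjannikov.sq_deriv_eq_of_energy_eq (hγpos t ht) henergy,
    fun hε => Ovsjannikov.le_of_energy_eq hε (hγpos t ht) henergy⟩
end
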